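/- For the Laplace prior p(h|σ) = (1/(2στ))^{2L} exp(−‖h‖₁/(τσ)) with fixed τ > 0, the negative log-prior −log p(h|σ) = 2L log(2στ) + ‖h‖₁/(τσ) is not jointly convex in (h, σ) on ℝ^{2L} × (0, ∞), but after the change of variables g = h/σ, ρ = 1/σ it equals 2L log(2τ) − 2L log ρ + ‖g‖₁/τ, which is jointly convex in (g, ρ). -/

import Mathlib

/-! The slice `h = 0` of the original objective is `σ ↦ 2L log(2τσ)`, which is strictly concave,
so the objective cannot be convex. After the change of variables the objective is a constant
plus `2L · (−log ρ)` plus `‖g‖₁ / τ`, a nonnegative combination of convex functions. -/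

open Real Set Finset

section Convexity

variable {𝕜 E β : Type*}

theorem not_convexOn_of_strictConcaveOn [Field 𝕜] [LinearOrder 𝕜] [IsStrictOrderedRing 𝕜]
    [AddCommMonoid E] [PartialOrder β] [AddCommMonoid β] [SMul 𝕜 E] [SMul 𝕜 β]
    {s : Set E} {f : E → β} (hf : StrictConcaveOn 𝕜 s f) {x y : E} (hx : x ∈ s) (hy : y ∈ s)
    (hxy : x ≠ y) : ¬ ConvexOn 𝕜 s f := fun hc =>
  have h₀ : (0 : 𝕜) < 1 / 2 := by norm_num
  have h₁ : (1 / 2 : 𝕜) + 1 / 2 = 1 := add_halves 1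
  (hc.2 hx hy h₀.le h₀.le h₁).not_gt (hf.2 hx hy hxy h₀ h₀ h₁)

theorem StrictConcaveOn.const_mul [AddCommMonoid E] [SMul ℝ E] {s : Set E} {f : E → ℝ}
    {c : ℝ} (hc : 0 < c) (hf : StrictConcaveOn ℝ s f) :
    StrictConcaveOn ℝ s fun x => c * f x := by
  refine ⟨hf.1, fun x hx y hy hxy a b ha hb hab => ?_⟩
  have := mul_lt_mul_of_pos_left (hf.2 hx hy hxy ha hb hab) hc
  simp only [smul_eq_mul] at this ⊢
  linarith

theorem ConvexOn.fun_sum [Semiring 𝕜] [PartialOrder 𝕜] [AddCommMonoid E] [AddCommMonoid β]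
    [PartialOrder β] [IsOrderedAddMonoid β] [SMul 𝕜 E] [Module 𝕜 β] {s : Set E} {ι : Type*}
    {t : Finset ι} {f : ι → E → β} (hs : Convex 𝕜 s) (hf : ∀ i ∈ t, ConvexOn 𝕜 s (f i)) :
    ConvexOn 𝕜 s fun x => ∑ i ∈ t, f i x := by
  classical
  induction t using Finset.induction_on with
  | empty => simpa using convexOn_const 0 hs
  | insert i t hi ih =>
    simp only [Finset.sum_insert hi]
    exact (hf i (mem_insert_self i t)).add (ih fun j hj => hf j (mem_insert_of_mem hj))

end Convexity

theorem convexOn_univ_sum_abs {ι : Type*} [Fintype ι] :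
    ConvexOn ℝ univ fun x : ι → ℝ => ∑ j, |x j| :=
  ConvexOn.fun_sum convex_univ fun j _ => by
    simpa [Function.comp_def, Real.norm_eq_abs] using
      (convexOn_univ_norm (E := ℝ)).comp_linearMap (LinearMap.proj (R := ℝ) (φ := fun _ : ι => ℝ) j)

theorem strictConcaveOn_mul_log_mul {c k : ℝ} (hc : 0 < c) (hk : 0 < k) :
    StrictConcaveOn ℝ (Ioi 0) fun x => c * log (x * k) :=
  ((strictConcaveOn_log_Ioi.const_mul hc).add_const (c * log k)).congr fun x hx => by
    simp only [Pi.add_apply, log_mul (ne_of_gt hx) hk.ne', mul_add]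

theorem log_mul_mul_eq_sub_log_one_div {σ : ℝ} (hσ : σ ≠ 0) {a b : ℝ} (ha : a ≠ 0)
    (hb : b ≠ 0) : log (a * σ * b) = log (a * b) - log (1 / σ) := by
  rw [one_div, log_inv, mul_right_comm, log_mul (mul_ne_zero ha hb) hσ, sub_neg_eq_add]

theorem sum_abs_div {ι : Type*} (t : Finset ι) (h : ι → ℝ) {σ : ℝ} (hσ : 0 < σ) :
    ∑ j ∈ t, |h j / σ| = (∑ j ∈ t, |h j|) / σ := by
  simp only [abs_div, abs_of_pos hσ, Finset.sum_div]

/-- The negative log Laplace prior `2L log(2στ) + ‖h‖₁/(τσ)` is not jointly convex in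
`(h, σ)` on `ℝ^{2L} × (0, ∞)`, but after the change of variables `g = h/σ`, `ρ = 1/σ`
it equals `2L log(2τ) − 2L log ρ + ‖g‖₁/τ`, which is jointly convex in `(g, ρ)`. -/
theorem neg_log_laplace_prior_reparametrization (L : ℕ) (hL : 0 < L)
    (τ : ℝ) (hτ : 0 < τ) :
    ¬ ConvexOn ℝ {p : (Fin (2 * L) → ℝ) × ℝ | 0 < p.2}
        (fun p => 2 * L * Real.log (2 * p.2 * τ) + (∑ j, |p.1 j|) / (τ * p.2)) ∧
    (∀ (h : Fin (2 * L) → ℝ) (σ : ℝ), 0 < σ →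
      2 * L * Real.log (2 * σ * τ) + (∑ j, |h j|) / (τ * σ)
        = 2 * L * Real.log (2 * τ) - 2 * L * Real.log (1 / σ)
          + (∑ j, |h j / σ|) / τ) ∧
    ConvexOn ℝ {p : (Fin (2 * L) → ℝ) × ℝ | 0 < p.2}
      (fun p => 2 * L * Real.log (2 * τ) - 2 * L * Real.log p.2
        + (∑ j, |p.1 j|) / τ) := by
  have h2L : (0 : ℝ) < 2 * L := by positivity
  have hs : Convex ℝ {p : (Fin (2 * L) → ℝ) × ℝ | 0 < p.2} :=
    (convex_Ioi 0).linear_preimage (LinearMap.snd ℝ _ ℝ)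
  refine ⟨fun hc => ?_, fun h σ hσ => ?_, ?_⟩
  · have hslice : ConvexOn ℝ (Ioi 0) fun σ : ℝ => 2 * L * log (σ * (2 * τ)) :=
      (hc.comp_linearMap (LinearMap.inr ℝ _ ℝ)).congr fun σ _ => by
        simp [mul_comm, mul_left_comm]
    exact not_convexOn_of_strictConcaveOn (strictConcaveOn_mul_log_mul h2L (by positivity))
      (mem_Ioi.2 one_pos) (mem_Ioi.2 two_pos) (by norm_num) hslice
  · rw [log_mul_mul_eq_sub_log_one_div hσ.ne' two_ne_zero hτ.ne', sum_abs_div _ _ hσ]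
    field_simp
  · have hlog : ConvexOn ℝ {p : (Fin (2 * L) → ℝ) × ℝ | 0 < p.2} fun p => -log p.2 :=
      strictConcaveOn_log_Ioi.concaveOn.neg.comp_linearMap (LinearMap.snd ℝ _ ℝ)
    have hnorm : ConvexOn ℝ {p : (Fin (2 * L) → ℝ) × ℝ | 0 < p.2} fun p => ∑ j, |p.1 j| :=
      (convexOn_univ_sum_abs.comp_linearMap (LinearMap.fst ℝ _ ℝ)).subset (subset_univ _) hs
    refine (((hlog.smul h2L.le).add (hnorm.smul (inv_nonneg.2 hτ.le))).add_const
      (2 * L * log (2 * τ))).congr fun p _ => ?_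
    simp only [Pi.add_apply, smul_eq_mul]
    ring
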